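/- arXiv:2211.13447 — 2 statements merged into one kernel-verified Lean document; each statement's English description precedes it below -/
import Mathlib

section
/- Let G be a base network with elimination order π, let G^t be its twin network, and let π^t be the twin elimination order. Let G_1,...,G_n be the graph sequence induced by π on G and G^t_1,...,G^t_n the twin graph sequence induced by π^t on G^t. Then for every index i and every variable X present in G_i, we have G^t_i(X) ⊆ G_i(X) ∪ G_i(X)' and G^t_i(X') ⊆ G_i(X) ∪ G_i(X)'. -/
namespace Counterfactual

attribute [local instance] Classical.propDecidable

noncomputable section

universe u v

variable {V : Type u}

variable {V : Type u}

/-- The directed graph given by edge relation `E` (`E p c` means `p` is a parent of `c`)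
is acyclic, i.e. it is a DAG. -/
def IsAcyclicRel (E : V → V → Prop) : Prop := ∀ x, ¬ Relation.TransGen E x x

/-- `x` is a root of the DAG `E`: it has no parents.  Non-roots are called internal. -/
def isRoot (E : V → V → Prop) (x : V) : Prop := ∀ p, ¬ E p x

/-- The family of variable `X` in the DAG `E`: `X` together with its parents. -/
def famOf (E : V → V → Prop) (X : V) : Set V := insert X {p | E p X}

/-- The moral graph of the DAG `E`: connect every pair of nodes having a common child,
then drop directions. -/
def moralGraph (E : V → V → Prop) : SimpleGraph V where
  Adj u w := u ≠ w ∧ (E u w ∨ E w u ∨ ∃ c, E u c ∧ E w c)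
  symm := by
    constructor
    intro u w h
    obtain ⟨h1, h2⟩ := h
    refine ⟨Ne.symm h1, ?_⟩
    rcases h2 with h | h | ⟨c, hc1, hc2⟩
    · exact Or.inr (Or.inl h)
    · exact Or.inl h
    · exact Or.inr (Or.inr ⟨c, hc2, hc1⟩)
  loopless := by
    constructor
    intro u h
    exact h.1 rfl

/-- Eliminating vertex `x` from an undirected graph: pairwise connect the neighbors
of `x`, then remove (isolate) `x`. -/
def eliminate (G : SimpleGraph V) (x : V) : SimpleGraph V where
  Adj u w := u ≠ w ∧ u ≠ x ∧ w ≠ x ∧ (G.Adj u w ∨ (G.Adj u x ∧ G.Adj x w))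
  symm := by
    constructor
    intro u w h
    obtain ⟨h1, h2, h3, h4⟩ := h
    refine ⟨Ne.symm h1, h3, h2, ?_⟩
    rcases h4 with h | ⟨ha, hb⟩
    · exact Or.inl h.symm
    · exact Or.inr ⟨hb.symm, ha.symm⟩
  loopless := by
    constructor
    intro u h
    exact h.1 rfl

/-- Eliminate a list of vertices, in order. -/
def elimList (G : SimpleGraph V) : List V → SimpleGraph V
  | [] => G
  | x :: xs => elimList (eliminate G x) xs

/-- The graph obtained from `G` after eliminating the first `i` variables of `π`. -/
def graphAt (G : SimpleGraph V) (π : List V) (i : ℕ) : SimpleGraph V :=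
  elimList G (π.take i)

/-- `x` together with its neighbors in the undirected graph `G`. -/
def closedNbhd (G : SimpleGraph V) (x : V) : Set V := insert x {y | G.Adj x y}

/-- An elimination order: a total ordering of all the variables. -/
def IsElimOrder (π : List V) : Prop := π.Nodup ∧ ∀ x : V, x ∈ π

/-- The cluster of variable `X` in the elimination process on the moral graph of `E`
induced by `π`: `X` together with its neighbors in the graph just before `X` is eliminated. -/
def clusterOf (E : V → V → Prop) (π : List V) (X : V) : Set V :=
  closedNbhd (graphAt (moralGraph E) π (π.idxOf X)) X

/-- The width of an elimination order: the size of its largest cluster minus one. -/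
def orderWidth (E : V → V → Prop) (π : List V) : ℕ :=
  sSup {n : ℕ | ∃ X ∈ π, n = (clusterOf E π X).ncard} - 1

/-- The treewidth of the DAG `E`: the minimum width attained by an elimination order. -/
def treewidthOf (E : V → V → Prop) : ℕ :=
  sInf {w : ℕ | ∃ π : List V, IsElimOrder π ∧ orderWidth E π = w}

/-! ### Twin networks -/

/-- The variables of the twin network of `E`: the base variables (`Sum.inl`) together
with a duplicate (`Sum.inr`) for every internal (non-root) variable. -/
abbrev TwinVar (E : V → V → Prop) : Type u := V ⊕ {x : V // ¬ isRoot E x}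

/-- The duplicate `X'` of a variable `X`; by convention `X' = X` when `X` is a root. -/
def twinDup (E : V → V → Prop) (x : V) : TwinVar E :=
  if h : isRoot E x then Sum.inl x else Sum.inr ⟨x, h⟩

/-- The edges of the twin network `G^t` of the base network `E`. -/
def twinEdge (E : V → V → Prop) (a b : TwinVar E) : Prop :=
  match a, b with
  | Sum.inl p, Sum.inl x => E p x
  | Sum.inl p, Sum.inr x => isRoot E p ∧ E p x.1
  | Sum.inr p, Sum.inr x => E p.1 x.1
  | Sum.inr _, Sum.inl _ => False

/-- The twin elimination order: replace each non-root variable `X` of `π`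
by the two consecutive variables `X, X'`. -/
def twinOrder (E : V → V → Prop) (π : List V) : List (TwinVar E) :=
  π.foldr (fun x acc =>
    (if h : isRoot E x then [Sum.inl x] else [Sum.inl x, Sum.inr ⟨x, h⟩]) ++ acc) []

/-- Eliminate the pair `{X, X'}` (a single variable when `X` is a root) from a graph
on the twin variables. -/
def elimTwinPair (E : V → V → Prop) (G : SimpleGraph (TwinVar E)) (x : V) :
    SimpleGraph (TwinVar E) :=
  if h : isRoot E x then eliminate G (Sum.inl x)
  else eliminate (eliminate G (Sum.inl x)) (Sum.inr ⟨x, h⟩)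

/-- The twin graph sequence: `twinGraphAt E π i` is the graph obtained from the moral graph
of the twin network after eliminating the pairs `{π 0, (π 0)'}, …` for the first `i`
variables of `π`. -/
def twinGraphAt (E : V → V → Prop) (π : List V) (i : ℕ) : SimpleGraph (TwinVar E) :=
  (π.take i).foldl (elimTwinPair E) (moralGraph (twinEdge E))

/-- The cluster of twin variable `Y` in the elimination process on the moral graph of the
twin network induced by the twin elimination order. -/
def twinClusterOf (E : V → V → Prop) (π : List V) (Y : TwinVar E) : Set (TwinVar E) :=
  clusterOf (twinEdge E) (twinOrder E π) Y

/-! ### Jointrees -/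

/-- A leaf of a tree: a node with exactly one neighbor. -/
def IsLeaf {J : Type v} (T : SimpleGraph J) (j : J) : Prop := ∃! k, T.Adj j k

/-- A jointree for the DAG `E`: a tree `T` together with a host function `H` mapping
(the index `X` of) each family of `E` to a nonempty set of hosting nodes; only leaves
may be hosts and each leaf hosts exactly one family. -/
structure Jointree (E : V → V → Prop) (J : Type v) where
  T : SimpleGraph J
  isTree : T.IsTree
  H : V → Set J
  hosts_nonempty : ∀ X : V, (H X).Nonempty
  hosts_leaf : ∀ (X : V) (j : J), j ∈ H X → IsLeaf T j
  leaf_host : ∀ j : J, IsLeaf T j → ∃! X : V, j ∈ H X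

variable {E : V → V → Prop} {J : Type v}

/-- The variables appearing (in a family hosted by a leaf) on the `i`-side of the
tree edge `(i, j)`. -/
def sideVars (jt : Jointree E J) (i j : J) : Set V :=
  {X | ∃ (Y : V) (l : J), l ∈ jt.H Y ∧ X ∈ famOf E Y ∧
    (jt.T.deleteEdges {s(i, j)}).Reachable i l}

/-- The separator of the tree edge `(i, j)`: the variables hosted on both sides. -/
def sepOf (jt : Jointree E J) (i j : J) : Set V :=
  sideVars jt i j ∩ sideVars jt j i

/-- The cluster of a jointree node: for a leaf, the family it hosts; for an internal
node, the union of the separators of its adjacent edges. -/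
def clusterJT (jt : Jointree E J) (i : J) : Set V :=
  if IsLeaf jt.T i then ⋃ X ∈ {Y : V | i ∈ jt.H Y}, famOf E X
  else ⋃ j ∈ {j : J | jt.T.Adj i j}, sepOf jt i j

/-- The width of a jointree: the size of its largest cluster minus one. -/
def widthJT (jt : Jointree E J) : ℕ := (⨆ i : J, (clusterJT jt i).ncard) - 1

/-- `l` is at or below `u` in the tree `T` rooted at `r`: `u` lies on every
(equivalently, on the unique) path from `r` to `l`. -/
def Below {J : Type v} (T : SimpleGraph J) (r u l : J) : Prop :=
  ∀ p : T.Walk r l, p.IsPath → u ∈ p.support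

/-- Node `u` of the jointree is duplicated by Algorithm 1 (with root `r`): every leaf at
or below `u` hosts only families of internal variables. -/
def Duplicated (jt : Jointree E J) (r u : J) : Prop :=
  ∀ l : J, IsLeaf jt.T l → Below jt.T r u l → ∀ X : V, l ∈ jt.H X → ¬ isRoot E X

/-- The nodes of the twin jointree produced by Algorithm 1: the original nodes
(`Sum.inl`) plus a duplicate (`Sum.inr`) of every duplicated node. -/
abbrev TwinJ (jt : Jointree E J) (r : J) := J ⊕ {u : J // Duplicated jt r u}

/-- Adjacency of the twin jointree produced by Algorithm 1: the original tree edges,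
the duplicates of the duplicated edges, and the edges attaching the roots of the
duplicate subtrees to the parents of the corresponding duplicated subtree roots. -/
def twinTAdj (jt : Jointree E J) (r : J) : TwinJ jt r → TwinJ jt r → Prop
  | Sum.inl i, Sum.inl j => jt.T.Adj i j
  | Sum.inl i, Sum.inr v => jt.T.Adj i v.1 ∧ ¬ Duplicated jt r i
  | Sum.inr u, Sum.inl j => jt.T.Adj u.1 j ∧ ¬ Duplicated jt r j
  | Sum.inr u, Sum.inr v => jt.T.Adj u.1 v.1

/-- The tree of the twin jointree produced by Algorithm 1. -/
def twinT (jt : Jointree E J) (r : J) : SimpleGraph (TwinJ jt r) where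
  Adj := twinTAdj jt r
  symm := by
    constructor
    rintro (i | u) (j | v) h <;> simp only [twinTAdj] at h ⊢
    · exact jt.T.adj_symm h
    · exact ⟨jt.T.adj_symm h.1, h.2⟩
    · exact ⟨jt.T.adj_symm h.1, h.2⟩
    · exact jt.T.adj_symm h
  loopless := by
    constructor
    rintro (i | u) h <;> simp only [twinTAdj] at h
    · exact jt.T.loopless.irrefl i h
    · exact jt.T.loopless.irrefl u.1 h

/-- The host function of the twin jointree produced by Algorithm 1: a base family is
hosted by the original hosts of the corresponding base family, and a duplicate family is
hosted by the duplicates of the hosts of the corresponding base family. -/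
def twinH (jt : Jointree E J) (r : J) : TwinVar E → Set (TwinJ jt r) :=
  fun a =>
    match a with
    | Sum.inl X => Sum.inl '' jt.H X
    | Sum.inr x => {b | ∃ (l : J) (hl : Duplicated jt r l),
        l ∈ jt.H x.1 ∧ b = Sum.inr ⟨l, hl⟩}

/-- The copy of jointree node `i` on the duplicate side: its duplicate if `i` is
duplicated, and `i` itself otherwise. -/
def dupJ (jt : Jointree E J) (r i : J) : TwinJ jt r :=
  if h : Duplicated jt r i then Sum.inr ⟨i, h⟩ else Sum.inl i

/-! ### Thinning -/

/-- Thinning rule 1 for removing the functional variable `X` from the separator of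
edge `(i,j)`: the edge lies on a path between two leaves hosting the family of `X`,
and every separator on this path contains `X`. -/
def Rule1 (jt : Jointree E J) (S : J → J → Set V) (i j : J) (X : V) : Prop :=
  ∃ (l m : J) (p : jt.T.Walk l m), p.IsPath ∧ l ∈ jt.H X ∧ m ∈ jt.H X ∧
    s(i, j) ∈ p.edges ∧ ∀ a b : J, s(a, b) ∈ p.edges → X ∈ S a b

/-- Thinning rule 2 for removing the variable `X` from the separator of edge `(i,j)`:
no other separator adjacent to `i` contains `X`, or no other separator adjacent to `j`
contains `X`. -/
def Rule2 (jt : Jointree E J) (S : J → J → Set V) (i j : J) (X : V) : Prop :=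
  (∀ k : J, jt.T.Adj i k → k ≠ j → X ∉ S i k) ∨
  (∀ k : J, jt.T.Adj j k → k ≠ i → X ∉ S j k)

/-- One valid thinning step on a separator assignment: remove a functional
(here: internal, as in an SCM) variable `X` from the separator of an edge `(i,j)`,
as licensed by one of the two thinning rules. -/
def ThinStep (jt : Jointree E J) (S S' : J → J → Set V) : Prop :=
  ∃ (i j : J) (X : V), jt.T.Adj i j ∧ ¬ isRoot E X ∧ X ∈ S i j ∧
    (Rule1 jt S i j X ∨ Rule2 jt S i j X) ∧
    S' = fun a b => if (a = i ∧ b = j) ∨ (a = j ∧ b = i) then S a b \ {X} else S a b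

/-- `S` is the separator assignment of a thinned jointree obtained from `jt`:
it is reachable from the separators of `jt` by valid thinning steps, applied
to exhaustion. -/
def IsThinning (jt : Jointree E J) (S : J → J → Set V) : Prop :=
  Relation.ReflTransGen (ThinStep jt) (fun i j => sepOf jt i j) S ∧
    ∀ S', ¬ ThinStep jt S S'

/-- The cluster of a node of a thinned jointree with separator assignment `S`. -/
def thClusterJT (jt : Jointree E J) (S : J → J → Set V) (i : J) : Set V :=
  if IsLeaf jt.T i then ⋃ X ∈ {Y : V | i ∈ jt.H Y}, famOf E X
  else ⋃ j ∈ {j : J | jt.T.Adj i j}, S i j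

/-- The width of a thinned jointree with separator assignment `S`. -/
def thWidthJT (jt : Jointree E J) (S : J → J → Set V) : ℕ :=
  (⨆ i : J, (thClusterJT jt S i).ncard) - 1

/-- The causal treewidth of the DAG `E` whose internal variables are all functional:
the minimum width attained by a thinned jointree for `E`. -/
def causalTreewidth (E : V → V → Prop) : ℕ :=
  sInf {w : ℕ | ∃ (J : Type u) (_ : Finite J) (jt : Jointree E J) (S : J → J → Set V),
    IsThinning jt S ∧ thWidthJT jt S = w}

/-- The thinned separator assignment for the twin jointree produced by Algorithm 1,
obtained from a thinned separator assignment `S` of the base jointree: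
`S^t = S` on duplicated edges, `S^t = S'` on duplicate edges, and
`S^t = S ∪ S'` on invariant edges. -/
def twinSep (jt : Jointree E J) (r : J) (S : J → J → Set V) :
    TwinJ jt r → TwinJ jt r → Set (TwinVar E)
  | Sum.inl i, Sum.inl j =>
      if Duplicated jt r i ∨ Duplicated jt r j then Sum.inl '' S i j
      else Sum.inl '' S i j ∪ twinDup E '' S i j
  | Sum.inl i, Sum.inr v => twinDup E '' S i v.1
  | Sum.inr u, Sum.inl j => twinDup E '' S u.1 j
  | Sum.inr u, Sum.inr v => twinDup E '' S u.1 v.1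

/-! ### N-world networks -/

/-- The variables of the `N`-world network of a base network with variables `V`,
with respect to a set `R` of roots: the variables in `R` (`Sum.inl`) stay unreplicated,
and each variable outside `R` is replaced by `N` duplicates (`Sum.inr`). -/
abbrev NVar (R : Set V) (N : ℕ) : Type u := {x : V // x ∈ R} ⊕ ({x : V // x ∉ R} × Fin N)

/-- The `k`-th duplicate `X^k` of variable `X`; by convention `X^k = X` when `X ∈ R`. -/
def ndup (R : Set V) (N : ℕ) (x : V) (k : Fin N) : NVar R N :=
  if h : x ∈ R then Sum.inl ⟨x, h⟩ else Sum.inr (⟨x, h⟩, k)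

/-- The edges of the `N`-world network `G^N` of the base network `E` with respect to the
set of roots `R`: a parent `P ∈ R` of `X` is a parent of every duplicate `X^k`, while a
parent `P ∉ R` of `X` yields the edges `P^k → X^k`. -/
def nEdge (E : V → V → Prop) (R : Set V) (N : ℕ) (a b : NVar R N) : Prop :=
  match a, b with
  | Sum.inl p, Sum.inr x => E p.1 x.1.1
  | Sum.inr p, Sum.inr x => E p.1.1 x.1.1 ∧ p.2 = x.2
  | _, _ => False

/-- Eliminate all `N` duplicates `x^1, …, x^N` of `x` (a single variable when `x ∈ R`). -/
def elimNBlock (R : Set V) (N : ℕ) (G : SimpleGraph (NVar R N)) (x : V) :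
    SimpleGraph (NVar R N) :=
  if h : x ∈ R then eliminate G (Sum.inl ⟨x, h⟩)
  else (List.ofFn (fun k : Fin N => (Sum.inr (⟨x, h⟩, k) : NVar R N))).foldl eliminate G

/-- The `N`-world elimination order obtained from `π`: replace each variable `x ∉ R`
by its `N` duplicates `x^1, …, x^N`. -/
def nOrder (R : Set V) (N : ℕ) (π : List V) : List (NVar R N) :=
  π.foldr (fun x acc =>
    (if h : x ∈ R then [(Sum.inl ⟨x, h⟩ : NVar R N)]
     else List.ofFn (fun k : Fin N => (Sum.inr (⟨x, h⟩, k) : NVar R N))) ++ acc) []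

/-! ### Generalized N-world networks -/

/-- The variables of a generalized `N`-world network: nodes outside the duplicated set `D`
stay unreplicated, and each node in `D` is replaced by `N` duplicates. -/
abbrev GNVar (D : Set V) (N : ℕ) : Type u := {x : V // x ∉ D} ⊕ ({x : V // x ∈ D} × Fin N)

/-- The edges of a generalized `N`-world network of the base network `E` with respect to
the duplicated set `D` and the optional extra edges `ex` between duplicates (an edge from
`X^i` to `X^j` is added when `i < j` and `ex X i j` holds). -/
def gnEdge (E : V → V → Prop) (D : Set V) (N : ℕ) (ex : V → Fin N → Fin N → Prop)
    (a b : GNVar D N) : Prop :=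
  match a, b with
  | Sum.inl p, Sum.inl x => E p.1 x.1
  | Sum.inl p, Sum.inr x => E p.1 x.1.1
  | Sum.inr p, Sum.inr x =>
      (E p.1.1 x.1.1 ∧ p.2 = x.2) ∨ (p.1.1 = x.1.1 ∧ p.2 < x.2 ∧ ex x.1.1 p.2 x.2)
  | Sum.inr _, Sum.inl _ => False


/-- The `N`-world graph sequence: the graph obtained from the moral graph of the
`N`-world network after eliminating all duplicates of the first `i` variables of `π`. -/
def nGraphAt (E : V → V → Prop) (R : Set V) (N : ℕ) (π : List V) (i : ℕ) :
    SimpleGraph (NVar R N) :=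
  (π.take i).foldl (elimNBlock R N) (moralGraph (nEdge E R N))

/-- The cluster of an `N`-world variable `Y` in the elimination process on the moral
graph of the `N`-world network induced by the `N`-world elimination order. -/
def nClusterOf (E : V → V → Prop) (R : Set V) (N : ℕ) (π : List V) (Y : NVar R N) :
    Set (NVar R N) :=
  clusterOf (nEdge E R N) (nOrder R N π) Y

end


section TwinAux

variable {V : Type u}

/-- Projection of a twin variable to its base variable. -/
def tproj {E : V → V → Prop} : TwinVar E → V
  | Sum.inl x => x
  | Sum.inr x => x.1

lemma tproj_twinDup {E : V → V → Prop} (x : V) : tproj (twinDup E x) = x := by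
  unfold twinDup
  split <;> rfl

lemma tproj_repr {E : V → V → Prop} (y : TwinVar E) :
    y = Sum.inl (tproj y) ∨ y = twinDup E (tproj y) := by
  cases y with
  | inl v => exact Or.inl rfl
  | inr v =>
    right
    show Sum.inr v = twinDup E v.1
    rw [twinDup, dif_neg v.2]

lemma tproj_ne_root {E : V → V → Prop} {x : V} (h : isRoot E x) (a : TwinVar E)
    (ha : a ≠ Sum.inl x) : tproj a ≠ x := by
  cases a with
  | inl v =>
    intro hv
    exact ha (by rw [show v = x from hv])
  | inr v =>
    intro hv
    exact v.2 (by rw [show v.1 = x from hv]; exact h)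

lemma tproj_ne_nonroot {E : V → V → Prop} {x : V} (h : ¬ isRoot E x) (a : TwinVar E)
    (ha1 : a ≠ Sum.inl x) (ha2 : a ≠ Sum.inr ⟨x, h⟩) : tproj a ≠ x := by
  cases a with
  | inl v =>
    intro hv
    exact ha1 (by rw [show v = x from hv])
  | inr v =>
    intro hv
    exact ha2 (by cases v with | mk v1 v2 => cases (show v1 = x from hv); rfl)

lemma twinEdge_proj {E : V → V → Prop} {a b : TwinVar E} (h : twinEdge E a b) :
    E (tproj a) (tproj b) := by
  cases a <;> cases b <;> simp only [twinEdge, tproj] at h ⊢ <;> tauto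

lemma moral_base_inv {E : V → V → Prop} :
    ∀ a b : TwinVar E, (moralGraph (twinEdge E)).Adj a b →
      tproj a = tproj b ∨ (moralGraph E).Adj (tproj a) (tproj b) := by
  intro a b ⟨hne, hor⟩
  by_cases hp : tproj a = tproj b
  · exact Or.inl hp
  · refine Or.inr ⟨hp, ?_⟩
    rcases hor with h | h | ⟨c, h1, h2⟩
    · exact Or.inl (twinEdge_proj h)
    · exact Or.inr (Or.inl (twinEdge_proj h))
    · exact Or.inr (Or.inr ⟨tproj c, twinEdge_proj h1, twinEdge_proj h2⟩)

lemma step_inv {E : V → V → Prop} (x : V)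
    (H : SimpleGraph (TwinVar E)) (G : SimpleGraph V)
    (ih : ∀ a b, H.Adj a b → tproj a = tproj b ∨ G.Adj (tproj a) (tproj b)) :
    ∀ a b, (elimTwinPair E H x).Adj a b →
      tproj a = tproj b ∨ (eliminate G x).Adj (tproj a) (tproj b) := by
  intro a b hab
  unfold elimTwinPair at hab
  by_cases hr : isRoot E x
  · rw [dif_pos hr] at hab
    obtain ⟨hne, ha, hb, hor⟩ := hab
    have hpa : tproj a ≠ x := tproj_ne_root hr a ha
    have hpb : tproj b ≠ x := tproj_ne_root hr b hb
    rcases hor with h | ⟨h1, h2⟩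
    · rcases ih a b h with h' | h'
      · exact Or.inl h'
      · exact Or.inr ⟨h'.ne, hpa, hpb, Or.inl h'⟩
    · have ha' : G.Adj (tproj a) x := by
        rcases ih a _ h1 with h' | h'
        · exact absurd h' hpa
        · exact h'
      have hb' : G.Adj x (tproj b) := by
        rcases ih _ b h2 with h' | h'
        · exact absurd h'.symm hpb
        · exact h'
      by_cases hpab : tproj a = tproj b
      · exact Or.inl hpab
      · exact Or.inr ⟨hpab, hpa, hpb, Or.inr ⟨ha', hb'⟩⟩
  · rw [dif_neg hr] at hab
    have hA1 : ∀ u w, (eliminate H (Sum.inl x)).Adj u w →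
        tproj u = tproj w ∨ G.Adj (tproj u) (tproj w) ∨
          (G.Adj (tproj u) x ∧ G.Adj x (tproj w)) := by
      intro u w hw
      obtain ⟨huw, hu1, hw1, hor⟩ := hw
      rcases hor with h | ⟨h1, h2⟩
      · rcases ih u w h with h' | h'
        · exact Or.inl h'
        · exact Or.inr (Or.inl h')
      · have h1' : tproj u = x ∨ G.Adj (tproj u) x := ih u _ h1
        have h2' : x = tproj w ∨ G.Adj x (tproj w) := ih _ w h2
        rcases h1' with h1' | h1' <;> rcases h2' with h2' | h2'
        · exact Or.inl (h1'.trans h2')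
        · exact Or.inr (Or.inl (by rw [h1']; exact h2'))
        · exact Or.inr (Or.inl (by rw [← h2']; exact h1'))
        · exact Or.inr (Or.inr ⟨h1', h2'⟩)
    obtain ⟨hne, ha2, hb2, hor⟩ := hab
    have ha1 : a ≠ Sum.inl x := by
      rcases hor with h | ⟨h, _⟩ <;> exact h.2.1
    have hb1 : b ≠ Sum.inl x := by
      rcases hor with h | ⟨_, h⟩ <;> exact h.2.2.1
    have hpa : tproj a ≠ x := tproj_ne_nonroot hr a ha1 ha2
    have hpb : tproj b ≠ x := tproj_ne_nonroot hr b hb1 hb2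
    rcases hor with h | ⟨h1, h2⟩
    · rcases hA1 a b h with h' | h' | ⟨hax, hxb⟩
      · exact Or.inl h'
      · exact Or.inr ⟨h'.ne, hpa, hpb, Or.inl h'⟩
      · by_cases hpab : tproj a = tproj b
        · exact Or.inl hpab
        · exact Or.inr ⟨hpab, hpa, hpb, Or.inr ⟨hax, hxb⟩⟩
    · have hax : G.Adj (tproj a) x := by
        rcases hA1 a _ h1 with h' | h' | ⟨h', h''⟩
        · exact absurd h' hpa
        · exact h'
        · exact h'
      have hxb : G.Adj x (tproj b) := by
        rcases hA1 _ b h2 with h' | h' | ⟨h', h''⟩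
        · exact absurd h'.symm hpb
        · exact h'
        · exact absurd h' (G.loopless.irrefl x)
      by_cases hpab : tproj a = tproj b
      · exact Or.inl hpab
      · exact Or.inr ⟨hpab, hpa, hpb, Or.inr ⟨hax, hxb⟩⟩

lemma list_inv {E : V → V → Prop} :
    ∀ (l : List V) (H : SimpleGraph (TwinVar E)) (G : SimpleGraph V),
      (∀ a b, H.Adj a b → tproj a = tproj b ∨ G.Adj (tproj a) (tproj b)) →
      ∀ a b, (l.foldl (elimTwinPair E) H).Adj a b →
        tproj a = tproj b ∨ (elimList G l).Adj (tproj a) (tproj b) := by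
  intro l
  induction l with
  | nil => intro H G ih a b hab; exact ih a b hab
  | cons x xs IH =>
    intro H G ih a b hab
    exact IH (elimTwinPair E H x) (eliminate G x) (step_inv x H G ih) a b hab

lemma final_helper {E : V → V → Prop} (T : SimpleGraph (TwinVar E)) (B : SimpleGraph V)
    (key : ∀ a b, T.Adj a b → tproj a = tproj b ∨ B.Adj (tproj a) (tproj b))
    (X : V) (w : TwinVar E) (hw : tproj w = X) :
    closedNbhd T w ⊆ Sum.inl '' closedNbhd B X ∪ twinDup E '' closedNbhd B X := by
  intro y hy
  have hXN : X ∈ closedNbhd B X := Set.mem_insert _ _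
  rcases Set.mem_insert_iff.mp hy with rfl | hadj
  · rcases tproj_repr y with h | h
    · exact Or.inl ⟨X, hXN, by rw [← hw]; exact h.symm⟩
    · exact Or.inr ⟨X, hXN, by rw [← hw]; exact h.symm⟩
  · have hk := key w y hadj
    rw [hw] at hk
    have hyN : tproj y ∈ closedNbhd B X := by
      rcases hk with h | h
      · rw [← h]; exact hXN
      · exact Set.mem_insert_iff.mpr (Or.inr h)
    rcases tproj_repr y with h | h
    · exact Or.inl ⟨tproj y, hyN, h.symm⟩
    · exact Or.inr ⟨tproj y, hyN, h.symm⟩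

end TwinAux


/-- the neighborhoods in the twin graph sequence are contained in the
corresponding base neighborhoods together with their duplicates. -/
theorem twin_graph_sequence_neighborhoods {V : Type*} [Fintype V]
    (E : V → V → Prop) (hE : IsAcyclicRel E)
    (π : List V) (hπ : IsElimOrder π) (i : ℕ) (hi : i < π.length)
    (X : V) (hX : X ∉ π.take i) :
    closedNbhd (twinGraphAt E π i) (Sum.inl X) ⊆
        Sum.inl '' closedNbhd (graphAt (moralGraph E) π i) X ∪
        twinDup E '' closedNbhd (graphAt (moralGraph E) π i) X ∧
    closedNbhd (twinGraphAt E π i) (twinDup E X) ⊆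
        Sum.inl '' closedNbhd (graphAt (moralGraph E) π i) X ∪
        twinDup E '' closedNbhd (graphAt (moralGraph E) π i) X := by
  have key : ∀ a b, (twinGraphAt E π i).Adj a b →
      tproj a = tproj b ∨ (graphAt (moralGraph E) π i).Adj (tproj a) (tproj b) :=
    list_inv (π.take i) (moralGraph (twinEdge E)) (moralGraph E) moral_base_inv
  exact ⟨final_helper _ _ key X (Sum.inl X) rfl,
         final_helper _ _ key X (twinDup E X) (tproj_twinDup X)⟩

end Counterfactual
end

section
/- There exist a base network G and an elimination order π for G such that π has width 2 while the twin elimination order π^t for the twin network G^t has width 5 = 2·2 + 1; hence the bound w^t ≤ 2w + 1 on the width of twin elimination orders is tight. -/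
namespace Counterfactual

attribute [local instance] Classical.propDecidable

attribute [-instance] Classical.propDecidable

namespace TightProof

def Erel : Fin 6 → Fin 6 → Prop := fun a b =>
  (a, b) ∈ ([(1,2),(2,3),(3,4),(0,4),(1,5),(3,5)] : List (Fin 6 × Fin 6))

instance : DecidableRel Erel := fun a b => by unfold Erel; infer_instance

def piL : List (Fin 6) := [2,1,0,3,4,5]

instance decMoral {V : Type} [DecidableEq V] [Fintype V] (E : V → V → Prop) [DecidableRel E] :
    DecidableRel (moralGraph E).Adj := fun u w =>
  inferInstanceAs (Decidable (u ≠ w ∧ (E u w ∨ E w u ∨ ∃ c, E u c ∧ E w c)))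

instance decElim {V : Type} [DecidableEq V] (G : SimpleGraph V) [DecidableRel G.Adj] (x : V) :
    DecidableRel (eliminate G x).Adj := fun u w =>
  inferInstanceAs (Decidable (u ≠ w ∧ u ≠ x ∧ w ≠ x ∧ (G.Adj u w ∨ (G.Adj u x ∧ G.Adj x w))))

def decElimList {V : Type} [DecidableEq V] : (l : List V) → (G : SimpleGraph V) →
    DecidableRel G.Adj → DecidableRel (elimList G l).Adj
  | [], _, h => h
  | x :: xs, G, h => decElimList xs (eliminate G x) (@decElim _ _ G h x)

instance instGraphAt {V : Type} [DecidableEq V] (G : SimpleGraph V) [h : DecidableRel G.Adj]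
    (π : List V) (i : ℕ) : DecidableRel (graphAt G π i).Adj := decElimList _ G h

instance instClosedNbhd {V : Type} [DecidableEq V] (G : SimpleGraph V) [DecidableRel G.Adj]
    (x y : V) : Decidable (y ∈ closedNbhd G x) :=
  inferInstanceAs (Decidable (y = x ∨ G.Adj x y))

instance instCoeFinset {α : Type} [DecidableEq α] (s : Finset α) (y : α) :
    Decidable (y ∈ (↑s : Set α)) := inferInstanceAs (Decidable (y ∈ s))

lemma decEq_eq {α : Sort*} (d1 d2 : DecidableEq α) : d1 = d2 := by
  funext a b; exact Subsingleton.elim _ _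

/-! Base network cluster computations. -/

lemma nc2 : (clusterOf Erel piL 2).ncard = 3 := by
  have h : clusterOf Erel piL 2 = ↑({1,2,3} : Finset (Fin 6)) := by
    simp only [clusterOf]
    rw [decEq_eq (fun a b => Classical.propDecidable _) (instDecidableEqFin 6)]
    rw [Set.ext_iff]; decide
  rw [h, Set.ncard_coe_finset]; rfl

lemma nc1 : (clusterOf Erel piL 1).ncard = 3 := by
  have h : clusterOf Erel piL 1 = ↑({1,3,5} : Finset (Fin 6)) := by
    simp only [clusterOf]
    rw [decEq_eq (fun a b => Classical.propDecidable _) (instDecidableEqFin 6)]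
    rw [Set.ext_iff]; decide
  rw [h, Set.ncard_coe_finset]; rfl

lemma nc0 : (clusterOf Erel piL 0).ncard = 3 := by
  have h : clusterOf Erel piL 0 = ↑({0,3,4} : Finset (Fin 6)) := by
    simp only [clusterOf]
    rw [decEq_eq (fun a b => Classical.propDecidable _) (instDecidableEqFin 6)]
    rw [Set.ext_iff]; decide
  rw [h, Set.ncard_coe_finset]; rfl

lemma nc3 : (clusterOf Erel piL 3).ncard = 3 := by
  have h : clusterOf Erel piL 3 = ↑({3,4,5} : Finset (Fin 6)) := by
    simp only [clusterOf]
    rw [decEq_eq (fun a b => Classical.propDecidable _) (instDecidableEqFin 6)]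
    rw [Set.ext_iff]; decide
  rw [h, Set.ncard_coe_finset]; rfl

lemma nc4 : (clusterOf Erel piL 4).ncard = 2 := by
  have h : clusterOf Erel piL 4 = ↑({4,5} : Finset (Fin 6)) := by
    simp only [clusterOf]
    rw [decEq_eq (fun a b => Classical.propDecidable _) (instDecidableEqFin 6)]
    rw [Set.ext_iff]; decide
  rw [h, Set.ncard_coe_finset]; rfl

lemma nc5 : (clusterOf Erel piL 5).ncard = 1 := by
  have h : clusterOf Erel piL 5 = ↑({5} : Finset (Fin 6)) := by
    simp only [clusterOf]
    rw [decEq_eq (fun a b => Classical.propDecidable _) (instDecidableEqFin 6)]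
    rw [Set.ext_iff]; decide
  rw [h, Set.ncard_coe_finset]; rfl

lemma width_base : orderWidth Erel piL = 2 := by
  have hset : {n : ℕ | ∃ X ∈ piL, n = (clusterOf Erel piL X).ncard} = {3, 2, 1} := by
    ext n
    constructor
    · rintro ⟨X, hX, rfl⟩
      simp only [piL, List.mem_cons, List.mem_singleton, List.not_mem_nil, or_false] at hX
      rcases hX with rfl | rfl | rfl | rfl | rfl | rfl <;>
        simp [nc0, nc1, nc2, nc3, nc4, nc5]
    · rintro (rfl | rfl | rfl)
      · exact ⟨2, by simp [piL], nc2.symm⟩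
      · exact ⟨4, by simp [piL], nc4.symm⟩
      · exact ⟨5, by simp [piL], nc5.symm⟩
  have hg : IsGreatest ({3, 2, 1} : Set ℕ) 3 := by
    constructor
    · simp
    · rintro n (rfl | rfl | rfl) <;> omega
  simp only [orderWidth]
  rw [hset, hg.csSup_eq]

/-! Twin network. -/

instance instRoot : DecidablePred (isRoot Erel) := fun x =>
  inferInstanceAs (Decidable (∀ p, ¬ Erel p x))

abbrev TV := TwinVar Erel

instance : Fintype {x : Fin 6 // ¬ isRoot Erel x} := Subtype.fintype _
instance : Fintype TV := inferInstanceAs (Fintype (Sum _ _))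

instance instTwinEdge : DecidableRel (twinEdge Erel) := fun a b =>
  match a, b with
  | Sum.inl p, Sum.inl x => inferInstanceAs (Decidable (Erel p x))
  | Sum.inl p, Sum.inr x => inferInstanceAs (Decidable (isRoot Erel p ∧ Erel p x.1))
  | Sum.inr p, Sum.inr x => inferInstanceAs (Decidable (Erel p.1 x.1))
  | Sum.inr _, Sum.inl _ => inferInstanceAs (Decidable False)

def tord : List TV :=
  [Sum.inl 2, Sum.inr ⟨2, by decide⟩, Sum.inl 1, Sum.inl 0,
   Sum.inl 3, Sum.inr ⟨3, by decide⟩, Sum.inl 4, Sum.inr ⟨4, by decide⟩,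
   Sum.inl 5, Sum.inr ⟨5, by decide⟩]

lemma twinOrder_eq : twinOrder Erel piL = tord := by
  simp only [twinOrder, piL, List.foldr_cons, List.foldr_nil]
  rw [dif_neg (by decide : ¬ isRoot Erel 2), dif_pos (by decide : isRoot Erel 1),
      dif_pos (by decide : isRoot Erel 0), dif_neg (by decide : ¬ isRoot Erel 3),
      dif_neg (by decide : ¬ isRoot Erel 4), dif_neg (by decide : ¬ isRoot Erel 5)]
  rfl

/-! Twin cluster computations. -/

lemma tl2 : (clusterOf (twinEdge Erel) tord (Sum.inl 2)).ncard = 3 := by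
  have h : clusterOf (twinEdge Erel) tord (Sum.inl 2) =
      ↑({Sum.inl 1, Sum.inl 2, Sum.inl 3} : Finset TV) := by
    simp only [clusterOf]
    rw [decEq_eq (fun a b => Classical.propDecidable _) (inferInstance : DecidableEq TV)]
    rw [Set.ext_iff]; decide
  rw [h, Set.ncard_coe_finset]; rfl

lemma tr2 : (clusterOf (twinEdge Erel) tord (Sum.inr ⟨2, by decide⟩)).ncard = 3 := by
  have h : clusterOf (twinEdge Erel) tord (Sum.inr ⟨2, by decide⟩) =
      ↑({Sum.inl 1, Sum.inr ⟨2, by decide⟩, Sum.inr ⟨3, by decide⟩} : Finset TV) := by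
    simp only [clusterOf]
    rw [decEq_eq (fun a b => Classical.propDecidable _) (inferInstance : DecidableEq TV)]
    rw [Set.ext_iff]; decide
  rw [h, Set.ncard_coe_finset]; rfl

lemma tl1 : (clusterOf (twinEdge Erel) tord (Sum.inl 1)).ncard = 5 := by
  have h : clusterOf (twinEdge Erel) tord (Sum.inl 1) =
      ↑({Sum.inl 1, Sum.inl 3, Sum.inl 5, Sum.inr ⟨3, by decide⟩,
         Sum.inr ⟨5, by decide⟩} : Finset TV) := by
    simp only [clusterOf]
    rw [decEq_eq (fun a b => Classical.propDecidable _) (inferInstance : DecidableEq TV)]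
    rw [Set.ext_iff]; decide
  rw [h, Set.ncard_coe_finset]; rfl

lemma tl0 : (clusterOf (twinEdge Erel) tord (Sum.inl 0)).ncard = 5 := by
  have h : clusterOf (twinEdge Erel) tord (Sum.inl 0) =
      ↑({Sum.inl 0, Sum.inl 3, Sum.inl 4, Sum.inr ⟨3, by decide⟩,
         Sum.inr ⟨4, by decide⟩} : Finset TV) := by
    simp only [clusterOf]
    rw [decEq_eq (fun a b => Classical.propDecidable _) (inferInstance : DecidableEq TV)]
    rw [Set.ext_iff]; decide
  rw [h, Set.ncard_coe_finset]; rfl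

lemma tl3 : (clusterOf (twinEdge Erel) tord (Sum.inl 3)).ncard = 6 := by
  have h : clusterOf (twinEdge Erel) tord (Sum.inl 3) =
      ↑({Sum.inl 3, Sum.inl 4, Sum.inl 5, Sum.inr ⟨3, by decide⟩,
         Sum.inr ⟨4, by decide⟩, Sum.inr ⟨5, by decide⟩} : Finset TV) := by
    simp only [clusterOf]
    rw [decEq_eq (fun a b => Classical.propDecidable _) (inferInstance : DecidableEq TV)]
    rw [Set.ext_iff]; decide
  rw [h, Set.ncard_coe_finset]; rfl

lemma tr3 : (clusterOf (twinEdge Erel) tord (Sum.inr ⟨3, by decide⟩)).ncard = 5 := by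
  have h : clusterOf (twinEdge Erel) tord (Sum.inr ⟨3, by decide⟩) =
      ↑({Sum.inl 4, Sum.inl 5, Sum.inr ⟨3, by decide⟩, Sum.inr ⟨4, by decide⟩,
         Sum.inr ⟨5, by decide⟩} : Finset TV) := by
    simp only [clusterOf]
    rw [decEq_eq (fun a b => Classical.propDecidable _) (inferInstance : DecidableEq TV)]
    rw [Set.ext_iff]; decide
  rw [h, Set.ncard_coe_finset]; rfl

lemma tl4 : (clusterOf (twinEdge Erel) tord (Sum.inl 4)).ncard = 4 := by
  have h : clusterOf (twinEdge Erel) tord (Sum.inl 4) =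
      ↑({Sum.inl 4, Sum.inl 5, Sum.inr ⟨4, by decide⟩, Sum.inr ⟨5, by decide⟩} : Finset TV) := by
    simp only [clusterOf]
    rw [decEq_eq (fun a b => Classical.propDecidable _) (inferInstance : DecidableEq TV)]
    rw [Set.ext_iff]; decide
  rw [h, Set.ncard_coe_finset]; rfl

lemma tr4 : (clusterOf (twinEdge Erel) tord (Sum.inr ⟨4, by decide⟩)).ncard = 3 := by
  have h : clusterOf (twinEdge Erel) tord (Sum.inr ⟨4, by decide⟩) =
      ↑({Sum.inl 5, Sum.inr ⟨4, by decide⟩, Sum.inr ⟨5, by decide⟩} : Finset TV) := by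
    simp only [clusterOf]
    rw [decEq_eq (fun a b => Classical.propDecidable _) (inferInstance : DecidableEq TV)]
    rw [Set.ext_iff]; decide
  rw [h, Set.ncard_coe_finset]; rfl

lemma tl5 : (clusterOf (twinEdge Erel) tord (Sum.inl 5)).ncard = 2 := by
  have h : clusterOf (twinEdge Erel) tord (Sum.inl 5) =
      ↑({Sum.inl 5, Sum.inr ⟨5, by decide⟩} : Finset TV) := by
    simp only [clusterOf]
    rw [decEq_eq (fun a b => Classical.propDecidable _) (inferInstance : DecidableEq TV)]
    rw [Set.ext_iff]; decide
  rw [h, Set.ncard_coe_finset]; rfl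

lemma tr5 : (clusterOf (twinEdge Erel) tord (Sum.inr ⟨5, by decide⟩)).ncard = 1 := by
  have h : clusterOf (twinEdge Erel) tord (Sum.inr ⟨5, by decide⟩) =
      ↑({Sum.inr ⟨5, by decide⟩} : Finset TV) := by
    simp only [clusterOf]
    rw [decEq_eq (fun a b => Classical.propDecidable _) (inferInstance : DecidableEq TV)]
    rw [Set.ext_iff]; decide
  rw [h, Set.ncard_coe_finset]; rfl

lemma width_twin : orderWidth (twinEdge Erel) tord = 5 := by
  have hset : {n : ℕ | ∃ X ∈ tord, n = (clusterOf (twinEdge Erel) tord X).ncard} =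
      {6, 5, 4, 3, 2, 1} := by
    ext n
    constructor
    · rintro ⟨X, hX, rfl⟩
      simp only [tord, List.mem_cons, List.mem_singleton, List.not_mem_nil, or_false] at hX
      rcases hX with rfl | rfl | rfl | rfl | rfl | rfl | rfl | rfl | rfl | rfl <;>
        simp [tl0, tl1, tl2, tl3, tl4, tl5, tr2, tr3, tr4, tr5]
    · rintro (rfl | rfl | rfl | rfl | rfl | rfl)
      · exact ⟨Sum.inl 3, by simp [tord], tl3.symm⟩
      · exact ⟨Sum.inl 1, by simp [tord], tl1.symm⟩
      · exact ⟨Sum.inl 4, by simp [tord], tl4.symm⟩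
      · exact ⟨Sum.inl 2, by simp [tord], tl2.symm⟩
      · exact ⟨Sum.inl 5, by simp [tord], tl5.symm⟩
      · exact ⟨Sum.inr ⟨5, by decide⟩, by simp [tord], tr5.symm⟩
  have hg : IsGreatest ({6, 5, 4, 3, 2, 1} : Set ℕ) 6 := by
    constructor
    · simp
    · rintro n (rfl | rfl | rfl | rfl | rfl | rfl) <;> omega
  simp only [orderWidth]
  rw [hset, hg.csSup_eq]

lemma acyc : IsAcyclicRel Erel := by
  have mono : ∀ a b : Fin 6, Erel a b → (a : ℕ) < (b : ℕ) := by decide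
  intro x hx
  have key : ∀ {a b : Fin 6}, Relation.TransGen Erel a b → (a : ℕ) < (b : ℕ) := by
    intro a b h
    induction h with
    | single h => exact mono _ _ h
    | tail _ h ih => exact ih.trans (mono _ _ h)
  exact absurd (key hx) (lt_irrefl _)

lemma elimOrd : IsElimOrder piL := ⟨by decide, by decide⟩

end TightProof

open TightProof

/-- the bound `w^t ≤ 2w + 1` on the width of twin elimination orders is
tight: some base network has an elimination order of width `2` whose twin elimination
order has width `5`. -/
theorem twin_order_width_bound_tight :
    ∃ (V : Type) (_ : Fintype V) (E : V → V → Prop) (π : List V),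
      IsAcyclicRel E ∧ IsElimOrder π ∧ orderWidth E π = 2 ∧
      orderWidth (twinEdge E) (twinOrder E π) = 5 := by
  refine ⟨Fin 6, inferInstance, Erel, piL, acyc, elimOrd, width_base, ?_⟩
  rw [twinOrder_eq]
  exact width_twin

end Counterfactual
end
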